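/- Let n ≥ 2. There is no nonempty bounded open convex set Ω ⊆ ℝⁿ and function u ∈ C⁴(Ω), locally uniformly convex, satisfying the affine maximal surface equation L[u] = 0 in Ω, such that w(x) = (det D²u(x))^{-(n+1)/(n+2)} extends to a continuous function on Ω̄ that vanishes identically on ∂Ω. -/

import Mathlib

open MeasureTheory

noncomputable section

/-- `ℝⁿ` with the Euclidean structure. -/
abbrev E (n : ℕ) := EuclideanSpace ℝ (Fin n)

/-- The Hessian matrix `D²u(x)` of second partial derivatives. -/
noncomputable def Hess {n : ℕ} (u : E n → ℝ) (x : E n) : Matrix (Fin n) (Fin n) ℝ :=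
  fun i j => iteratedFDeriv ℝ 2 u x ![EuclideanSpace.single i 1, EuclideanSpace.single j 1]

/-- `w(x) = (det D²u(x))^(-(n+1)/(n+2))`. -/
noncomputable def wFn (n : ℕ) (u : E n → ℝ) (x : E n) : ℝ :=
  (Hess u x).det ^ (-(n + 1 : ℝ) / (n + 2))

/-- The affine maximal surface operator `L[u](x) = ∑ᵢⱼ Uⁱʲ(x) ∂²w/∂xᵢ∂xⱼ(x)`,
where `[Uⁱʲ]` is the cofactor (= adjugate, by symmetry of the Hessian) matrix of `D²u`. -/
noncomputable def Lop (n : ℕ) (u : E n → ℝ) (x : E n) : ℝ :=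
  ∑ i, ∑ j, (Hess u x).adjugate i j *
    iteratedFDeriv ℝ 2 (wFn n u) x ![EuclideanSpace.single i 1, EuclideanSpace.single j 1]

/-!
On `Ω` the function `w` is positive and `C²`, and `L[u] = 0` says that it solves the linear
equation `Uⁱʲ ∂ᵢ∂ⱼ w = 0` whose coefficient matrix, the cofactor matrix of the positive definite
Hessian, is itself positive definite. The weak maximum principle for such operators then bounds
`w` on `Ω` by its boundary values `0`, contradicting `w > 0`. The maximum principle comes from the
second derivative test: a perturbation `w + ε‖x‖²` has a strictly positive operator value, so it
cannot have an interior maximum, and for small `ε` a maximum on the boundary is excluded too.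
-/

open Filter Topology Finset

theorem IsLocalMax.deriv_deriv_nonpos {g : ℝ → ℝ} {t : ℝ} (h : IsLocalMax g t)
    (hc : ContinuousAt g t) : deriv (deriv g) t ≤ 0 := by
  by_contra! hpos
  -- The second derivative test makes `t` a local minimum too, so `g` is locally constant.
  have hmin : IsLocalMin g t := isLocalMin_of_deriv_deriv_pos hpos h.deriv_eq_zero hc
  have hconst : g =ᶠ[𝓝 t] fun _ => g t := by
    filter_upwards [h, hmin] with s hs hs' using le_antisymm hs hs'
  rw [hconst.deriv.deriv_eq] at hpos
  simp at hpos

theorem IsLocalMax.fderiv_fderiv_apply_self_nonpos {F : Type*} [NormedAddCommGroup F]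
    [NormedSpace ℝ F] {f : F → ℝ} {y : F} (h : IsLocalMax f y) (hf : ContDiffAt ℝ 2 f y)
    (v : F) : fderiv ℝ (fderiv ℝ f) y v v ≤ 0 := by
  set γ : ℝ → F := fun t => y + t • v
  have hγ : ∀ t, HasDerivAt γ v t := fun t => by
    simpa [γ] using (hasDerivAt_id t).smul_const v
  have hγ0 : γ 0 = y := by simp [γ]
  have hγy : Tendsto γ (𝓝 0) (𝓝 y) := hγ0 ▸ (hγ 0).continuousAt.tendsto
  have hderiv : deriv (f ∘ γ) =ᶠ[𝓝 0] fun t => fderiv ℝ f (γ t) v := by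
    filter_upwards [hγy.eventually (hf.eventually (by simp))] with t ht
    exact ((ht.differentiableAt (by simp)).hasFDerivAt.comp_hasDerivAt t (hγ t)).deriv
  have hderiv2 : HasDerivAt (fun t => fderiv ℝ f (γ t) v) (fderiv ℝ (fderiv ℝ f) y v v) 0 := by
    have hd : DifferentiableAt ℝ (fderiv ℝ f) (γ 0) :=
      hγ0 ▸ (hf.fderiv_right (m := 1) (by norm_num)).differentiableAt one_ne_zero
    simpa [hγ0] using (hd.hasFDerivAt.comp_hasDerivAt 0 (hγ 0)).clm_apply (hasDerivAt_const 0 v)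
  calc fderiv ℝ (fderiv ℝ f) y v v = deriv (deriv (f ∘ γ)) 0 := by
        rw [hderiv.deriv_eq, hderiv2.deriv]
    _ ≤ 0 := (hγ0 ▸ h : IsLocalMax f (γ 0)).comp_continuous (hγ 0).continuousAt
        |>.deriv_deriv_nonpos (hf.continuousAt.comp_of_eq (hγ 0).continuousAt hγ0)

section SecondOrderOp

variable {ι : Type*} [Fintype ι] [DecidableEq ι]

theorem Matrix.PosSemidef.sum_mul_apply_single_nonpos {A : Matrix ι ι ℝ} (hA : A.PosSemidef)
    {B : EuclideanSpace ℝ ι →L[ℝ] EuclideanSpace ℝ ι →L[ℝ] ℝ} (hB : ∀ v, B v v ≤ 0) :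
    ∑ i, ∑ j, A i j * B (EuclideanSpace.single i 1) (EuclideanSpace.single j 1) ≤ 0 := by
  obtain ⟨m, c, rfl⟩ := Matrix.posSemidef_iff_eq_sum_vecMulVec.1 hA
  let e : ι → EuclideanSpace ℝ ι := fun i => EuclideanSpace.single i 1
  calc ∑ i, ∑ j, (∑ k, Matrix.vecMulVec (c k) (star (c k))) i j * B (e i) (e j)
      = ∑ k, B (∑ i, c k i • e i) (∑ j, c k j • e j) := by
        simp only [Matrix.sum_apply, Matrix.vecMulVec_apply, star_trivial, sum_mul, map_sum,
          map_smul, _root_.sum_apply, _root_.smul_apply, smul_eq_mul]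
        rw [sum_comm_cycle]
        refine sum_congr rfl fun k _ => ?_
        rw [sum_comm]
        simp only [mul_sum]
        exact sum_congr rfl fun i _ => sum_congr rfl fun j _ => by ring
    _ ≤ 0 := sum_nonpos fun k _ => hB _

theorem Matrix.PosDef.adjugate {A : Matrix ι ι ℝ} (hA : A.PosDef) : A.adjugate.PosDef := by
  have : A.adjugate = A.det • A⁻¹ := by
    rw [Matrix.inv_def, smul_smul, Ring.inverse_eq_inv, mul_inv_cancel₀ hA.det_pos.ne', one_smul]
  exact this ▸ hA.inv.smul hA.det_pos

def secondOrderOp (A : Matrix ι ι ℝ) (f : EuclideanSpace ℝ ι → ℝ) (x : EuclideanSpace ℝ ι) : ℝ :=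
  ∑ i, ∑ j, A i j *
    iteratedFDeriv ℝ 2 f x ![EuclideanSpace.single i 1, EuclideanSpace.single j 1]

theorem IsLocalMax.secondOrderOp_nonpos {A : Matrix ι ι ℝ} (hA : A.PosSemidef)
    {f : EuclideanSpace ℝ ι → ℝ} {y : EuclideanSpace ℝ ι} (h : IsLocalMax f y)
    (hf : ContDiffAt ℝ 2 f y) : secondOrderOp A f y ≤ 0 := by
  simpa only [secondOrderOp, iteratedFDeriv_two_apply, Matrix.cons_val_zero, Matrix.cons_val_one]
    using hA.sum_mul_apply_single_nonpos (h.fderiv_fderiv_apply_self_nonpos hf)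

theorem secondOrderOp_add (A : Matrix ι ι ℝ) {f g : EuclideanSpace ℝ ι → ℝ}
    {x : EuclideanSpace ℝ ι} (hf : ContDiffAt ℝ 2 f x) (hg : ContDiffAt ℝ 2 g x) :
    secondOrderOp A (f + g) x = secondOrderOp A f x + secondOrderOp A g x := by
  simp only [secondOrderOp, iteratedFDeriv_add_apply hf hg, _root_.add_apply,
    mul_add, sum_add_distrib]

theorem Filter.EventuallyEq.secondOrderOp_eq (A : Matrix ι ι ℝ) {f g : EuclideanSpace ℝ ι → ℝ}
    {x : EuclideanSpace ℝ ι} (h : f =ᶠ[𝓝 x] g) : secondOrderOp A f x = secondOrderOp A g x := by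
  simp only [secondOrderOp, (h.iteratedFDeriv ℝ 2).eq_of_nhds]

theorem secondOrderOp_const_mul_norm_sq (A : Matrix ι ι ℝ) (c : ℝ) (x : EuclideanSpace ℝ ι) :
    secondOrderOp A (fun y => c * ‖y‖ ^ 2) x = 2 * c * A.trace := by
  have hfderiv : fderiv ℝ (fun y : EuclideanSpace ℝ ι => c * ‖y‖ ^ 2) = (2 * c) • innerSL ℝ := by
    ext y : 1
    rw [((hasStrictFDerivAt_norm_sq y).hasFDerivAt.const_mul c).fderiv]
    ext v
    simp only [two_smul, smul_add, add_apply, smul_apply, coe_innerSL_apply, smul_eq_mul]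
    ring
  have hfderiv2 (i j : ι) : fderiv ℝ (fderiv ℝ fun y : EuclideanSpace ℝ ι => c * ‖y‖ ^ 2) x
      (EuclideanSpace.single i 1) (EuclideanSpace.single j 1) = 2 * c * if i = j then 1 else 0 := by
    rw [hfderiv, ContinuousLinearMap.fderiv, smul_apply, smul_apply, innerSL_apply_apply]
    simp [EuclideanSpace.inner_single_left, PiLp.single_apply]
  simp only [secondOrderOp, iteratedFDeriv_two_apply, Matrix.cons_val_zero, Matrix.cons_val_one,
    hfderiv2]
  simp [Matrix.trace, mul_sum, mul_comm]

theorem weak_maximum_principle [Nonempty ι] {Ω : Set (EuclideanSpace ℝ ι)}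
    {A : EuclideanSpace ℝ ι → Matrix ι ι ℝ} {f : EuclideanSpace ℝ ι → ℝ} (hΩ : IsOpen Ω)
    (hΩb : Bornology.IsBounded Ω) (hA : ∀ x ∈ Ω, (A x).PosDef) (hfc : ContinuousOn f (closure Ω))
    (hf : ∀ x ∈ Ω, ContDiffAt ℝ 2 f x) (hLf : ∀ x ∈ Ω, 0 ≤ secondOrderOp (A x) f x)
    (hfΩ : ∀ x ∈ frontier Ω, f x ≤ 0) : ∀ x ∈ Ω, f x ≤ 0 := by
  intro x₀ hx₀
  by_contra! hfx₀
  obtain ⟨R, hR⟩ := isBounded_iff_forall_norm_le.1 hΩb.closure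
  -- `ε‖x‖² < f x₀` on `closure Ω`, so `f + ε‖x‖²` does not attain its maximum on the frontier.
  set ε := f x₀ / (R ^ 2 + 1)
  have hε : 0 < ε := by positivity
  have hεR : ε * R ^ 2 < f x₀ := by
    calc ε * R ^ 2 < ε * (R ^ 2 + 1) := by gcongr; linarith
      _ = f x₀ := div_mul_cancel₀ _ (by positivity)
  set q : EuclideanSpace ℝ ι → ℝ := fun x => ε * ‖x‖ ^ 2
  have hq : ContDiff ℝ 2 q := contDiff_const.mul (contDiff_norm_sq ℝ)
  have hqR : ∀ x ∈ closure Ω, q x ≤ ε * R ^ 2 := fun x hx => by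
    simp only [q]
    gcongr
    exact hR x hx
  obtain ⟨y, hyK, hymax⟩ := hΩb.isCompact_closure.exists_isMaxOn ⟨x₀, subset_closure hx₀⟩
    (hfc.add hq.continuous.continuousOn)
  have hyΩ : y ∈ Ω := by
    by_contra hy
    have hyf : y ∈ frontier Ω := ⟨hyK, by rwa [hΩ.interior_eq]⟩
    have : f x₀ + q x₀ ≤ f y + q y := hymax (subset_closure hx₀)
    linarith [hfΩ y hyf, hqR y hyK, show 0 ≤ q x₀ by positivity]
  have hmax : IsLocalMax (f + q) y :=
    hymax.isLocalMax (mem_of_superset (hΩ.mem_nhds hyΩ) subset_closure)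
  have hL := hmax.secondOrderOp_nonpos (hA y hyΩ).posSemidef ((hf y hyΩ).add hq.contDiffAt)
  rw [secondOrderOp_add _ (hf y hyΩ) hq.contDiffAt, secondOrderOp_const_mul_norm_sq] at hL
  nlinarith [hLf y hyΩ, (hA y hyΩ).trace_pos]

end SecondOrderOp

theorem ContDiffAt.matrix_det {𝕜 F ι : Type*} [NontriviallyNormedField 𝕜] [NormedAddCommGroup F]
    [NormedSpace 𝕜 F] [Fintype ι] [DecidableEq ι] {M : F → Matrix ι ι 𝕜} {x : F} {k : WithTop ℕ∞}
    (hM : ∀ i j, ContDiffAt 𝕜 k (fun y => M y i j) x) : ContDiffAt 𝕜 k (fun y => (M y).det) x := by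
  simp only [Matrix.det_apply']
  exact ContDiffAt.sum fun σ _ => contDiffAt_const.mul (contDiffAt_prod fun i _ => hM (σ i) i)

theorem ContDiffAt.hess_apply {n k : ℕ} {u : E n → ℝ} {x : E n} (hu : ContDiffAt ℝ (k + 2) u x)
    (i j : Fin n) : ContDiffAt ℝ k (fun y => Hess u y i j) x :=
  (ContinuousMultilinearMap.apply ℝ (fun _ : Fin 2 => E n) ℝ
    ![EuclideanSpace.single i 1, EuclideanSpace.single j 1]).contDiff.contDiffAt.comp x
    (hu.iteratedFDeriv_right (by norm_num))

theorem ContDiffAt.wFn {n : ℕ} {u : E n → ℝ} {x : E n} (hu : ContDiffAt ℝ 4 u x)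
    (hdet : (Hess u x).det ≠ 0) : ContDiffAt ℝ 2 (wFn n u) x :=
  (ContDiffAt.matrix_det (hu.hess_apply (k := 2))).rpow_const_of_ne hdet

theorem Lop_eq_secondOrderOp (n : ℕ) (u : E n → ℝ) (x : E n) :
    Lop n u x = secondOrderOp (Hess u x).adjugate (wFn n u) x := rfl

/-- **Necessary condition for the affine Plateau problem** (Section 5): there is no affine
maximal, locally uniformly convex function on a nonempty bounded open convex domain for which
`w = (det D²u)^{-(n+1)/(n+2)}` extends continuously to `Ω̄` with zero boundary values. -/
theorem no_affine_maximal_with_w_vanishing_on_boundary (n : ℕ) (hn : 2 ≤ n) :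
    ¬ ∃ (Ω : Set (E n)) (u W : E n → ℝ),
      Ω.Nonempty ∧ IsOpen Ω ∧ Convex ℝ Ω ∧ Bornology.IsBounded Ω ∧
      ContDiffOn ℝ 4 u Ω ∧
      (∀ x ∈ Ω, (Hess u x).PosDef) ∧
      (∀ x ∈ Ω, Lop n u x = 0) ∧
      ContinuousOn W (closure Ω) ∧
      (∀ x ∈ Ω, W x = wFn n u x) ∧
      (∀ x ∈ frontier Ω, W x = 0) := by
  rintro ⟨Ω, u, W, ⟨x₀, hx₀⟩, hΩ, -, hΩb, hu, hpos, hL, hWc, hWw, hW0⟩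
  have : Nonempty (Fin n) := ⟨⟨0, by omega⟩⟩
  have hWw_nhds : ∀ x ∈ Ω, W =ᶠ[𝓝 x] wFn n u := fun x hx =>
    eventually_of_mem (hΩ.mem_nhds hx) hWw
  have hw : ∀ x ∈ Ω, ContDiffAt ℝ 2 (wFn n u) x := fun x hx =>
    (hu.contDiffAt (hΩ.mem_nhds hx)).wFn (hpos x hx).det_pos.ne'
  have hWx₀ : W x₀ ≤ 0 := weak_maximum_principle hΩ hΩb (fun x hx => (hpos x hx).adjugate) hWc
    (fun x hx => (hw x hx).congr_of_eventuallyEq (hWw_nhds x hx))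
    (fun x hx => by rw [(hWw_nhds x hx).secondOrderOp_eq, ← Lop_eq_secondOrderOp, hL x hx])
    (fun x hx => (hW0 x hx).le) x₀ hx₀
  have hw₀ : 0 < wFn n u x₀ := Real.rpow_pos_of_pos (hpos x₀ hx₀).det_pos _
  linarith [hWw x₀ hx₀]

end
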